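/- Let R be a commutative ring and let W_n be the Fibonacci-type sequence in R[T] defined by W_0 = 0, W_1 = 1, W_n = f·W_{n-1} + g·W_{n-2} for fixed f, g in R[T]. Then for every n ≥ 0, W_n is congruent modulo f^2 + 4g to n·(-g)^{(n-1)/2} if n is odd, and to (-1)^{(n+2)/2}·n·f·g^{(n-2)/2}/2 if n is even (assuming 2 is invertible in R). -/

import Mathlib

open Polynomial

noncomputable def lucasW {R : Type*} [CommRing R] (f g : Polynomial R) : ℕ → Polynomial R
  | 0 => 0
  | 1 => 1
  | n + 2 => f * lucasW f g (n + 1) + g * lucasW f g n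

/-!
Modulo the discriminant `f ^ 2 + 4 * g`, the characteristic polynomial `X ^ 2 - f * X - g` of the
recurrence becomes the square `(X - f / 2) ^ 2`, and a linear recurrence with a double root `a`
starting at `0, 1` is `W n = n * a ^ (n - 1)`. Since `(f / 2) ^ 2 = -g` there, the even and odd
powers of `f / 2` give the two closed forms.
-/

theorem succ_eq_mul_pow_of_double_root {S : Type*} [CommRing S] (a : S) {w : ℕ → S}
    (h0 : w 0 = 0) (h1 : w 1 = 1)
    (hrec : ∀ n, w (n + 2) = 2 * a * w (n + 1) - a ^ 2 * w n) (n : ℕ) :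
    w (n + 1) = (n + 1) * a ^ n := by
  induction n using Nat.twoStepInduction with
  | zero => simp [h1]
  | one => rw [hrec, h1, h0]; ring
  | more n ih₀ ih₁ =>
    rw [hrec, ih₁, ih₀]
    push_cast
    ring

theorem map_lucasW_succ {R S : Type*} [CommRing R] [CommRing S] (φ : R[X] →+* S)
    {f g : R[X]} {a : S} (hf : φ f = 2 * a) (hg : φ g = -a ^ 2) (n : ℕ) :
    φ (lucasW f g (n + 1)) = (n + 1) * a ^ n :=
  succ_eq_mul_pow_of_double_root a (w := fun n ↦ φ (lucasW f g n))
    (by simp [lucasW]) (by simp [lucasW]) (fun n ↦ by simp [lucasW, hf, hg]; ring) n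

theorem map_lucasW_of_map_disc_eq_zero {R S : Type*} [CommRing R] [Invertible (2 : R)]
    [CommRing S] (φ : R[X] →+* S) {f g : R[X]} (hdisc : φ (f ^ 2 + 4 * g) = 0) (n : ℕ) :
    φ (lucasW f g n) =
      φ (if Odd n then (n : R[X]) * (-g) ^ ((n - 1) / 2)
        else (-1) ^ ((n + 2) / 2) * (n : R[X]) * f * g ^ ((n - 2) / 2) * C (⅟(2 : R))) := by
  set c := φ (C ⅟2)
  have hhalf : 2 * c = 1 := by
    rw [← map_ofNat φ 2, ← map_mul, ← map_ofNat C 2, ← C_mul, mul_invOf_self, C_1, map_one]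
  set a := φ f * c
  have hf : φ f = 2 * a := by linear_combination (-φ f) * hhalf
  have hg : φ g = -a ^ 2 := by
    simp only [map_add, map_pow, map_mul, map_ofNat] at hdisc
    linear_combination c ^ 2 * hdisc - φ g * (2 * c + 1) * hhalf
  obtain ⟨k, rfl | rfl⟩ := Nat.even_or_odd' n
  · rcases k with _ | k
    · simp [lucasW]
    · have hsign : ((-1 : S) ^ k) ^ 2 = 1 := by
        rw [← pow_mul, mul_comm]; exact (even_two_mul k).neg_one_pow
      rw [if_neg (Nat.not_odd_iff_even.2 (even_two_mul _)),
        show 2 * (k + 1) = 2 * k + 1 + 1 by ring, map_lucasW_succ φ hf hg,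
        show (2 * k + 1 + 1 + 2) / 2 = k + 2 by omega, show (2 * k + 1 + 1 - 2) / 2 = k by omega]
      simp only [map_mul, map_pow, map_neg, map_one, map_natCast, hf, hg, neg_pow (a ^ 2)]
      push_cast
      linear_combination (-(2 * k + 2) * a ^ (2 * k + 1)) * hsign
        - (2 * k + 2) * a ^ (2 * k + 1) * ((-1) ^ k) ^ 2 * hhalf
  · rw [if_pos (odd_two_mul_add_one k), map_lucasW_succ φ hf hg,
      show (2 * k + 1 - 1) / 2 = k by omega]
    simp only [map_mul, map_pow, map_neg, map_natCast, hg, neg_neg, pow_mul]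
    push_cast
    ring

theorem lucasW_mod_disc (R : Type*) [CommRing R] [Invertible (2 : R)]
    (f g : Polynomial R) (n : ℕ) :
    (f ^ 2 + 4 * g) ∣
      (lucasW f g n -
        (if Odd n then (n : Polynomial R) * (-g) ^ ((n - 1) / 2)
         else (-1) ^ ((n + 2) / 2) * (n : Polynomial R) * f * g ^ ((n - 2) / 2) *
           C (⅟(2 : R)))) := by
  rw [← Ideal.mem_span_singleton, ← Ideal.Quotient.eq]
  exact map_lucasW_of_map_disc_eq_zero _
    (Ideal.Quotient.eq_zero_iff_mem.2 (Ideal.mem_span_singleton_self _)) n
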